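/- Under the standing assumptions, if δ > 0, then for every θ > 0, every t ≥ 0 and every w ∈ H × H one has [exp(tT) w, exp(tT) w]_θ ≤ exp(−2 ω_θ t) · [w, w]_θ; that is, the semigroup exp(tT) decays at exponential rate ω_θ in the norm |·|_θ. -/

import Mathlib

/-!
Along `u t = exp (t • T) w` the energy `E t = re [u t, u t]_θ` satisfies
`E' = -2 (re ⟪D u₁, u₁⟫ + θ re ⟪D u₂, u₂⟫)`: the mixed terms of `[·, ·]_θ` are designed so that
everything but the dissipation cancels. On the other hand, each term of `[u, u]_θ` is controlled
by the dissipation through `α`, `β`, `δ` and `K = ‖A^{-1/2} D A^{-1/2}‖`, the mixed term by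
Cauchy–Schwarz, and the best constant is `1/β` plus the top eigenvalue of a `2 × 2` matrix; this
constant is `1/ω_θ`. Hence `E' ≤ -2 ω_θ E`, and Grönwall's inequality concludes.
-/
set_option maxSynthPendingDepth 3

open scoped InnerProductSpace

/-- The matrix operator `T(w₁, w₂) = (−D w₁ − A w₂, w₁)` on `H × H`. -/
noncomputable def Tlin {H : Type*} [NormedAddCommGroup H] [InnerProductSpace ℂ H]
    (A D : H →L[ℂ] H) : (H × H) →L[ℂ] (H × H) :=
  ((-(D.comp (ContinuousLinearMap.fst ℂ H H)))
      - A.comp (ContinuousLinearMap.snd ℂ H H)).prod (ContinuousLinearMap.fst ℂ H H)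

/-- The sesquilinear form `[w, v]_θ` on `H × H`, where `S = A^{1/2}` and
`Sinv = A^{-1/2}`. -/
noncomputable def formTheta {H : Type*} [NormedAddCommGroup H] [InnerProductSpace ℂ H]
    (D S Sinv : H →L[ℂ] H) (θ : ℝ) (w v : H × H) : ℂ :=
  inner ℂ w.1 v.1 + (θ : ℂ) * inner ℂ (Sinv w.1) (Sinv v.1) + inner ℂ (S w.2) (S v.2)
    + (θ : ℂ) * inner ℂ w.2 v.2 + (θ : ℂ) * inner ℂ (Sinv (D w.2)) (Sinv (D v.2))
    + (θ : ℂ) * inner ℂ (Sinv (D w.2)) (Sinv v.1) + (θ : ℂ) * inner ℂ (Sinv w.1) (Sinv (D v.2))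

theorem IsSelfAdjoint.of_mul_eq_one {R : Type*} [Monoid R] [StarMul R] {s r : R}
    (hs : IsSelfAdjoint s) (h : s * r = 1) : IsSelfAdjoint r := by
  have h' : star r * s = 1 := by simpa [hs.star_eq] using congrArg star h
  exact left_inv_eq_right_inv h' h

theorem IsSelfAdjoint.mul_eq_one_symm {R : Type*} [Monoid R] [StarMul R] {s r : R}
    (hs : IsSelfAdjoint s) (h : s * r = 1) : r * s = 1 := by
  simpa [hs.star_eq, (hs.of_mul_eq_one h).star_eq] using congrArg star h

theorem ContinuousLinearMap.norm_apply_le_norm_mul_mul_norm_apply {𝕜 E : Type*}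
    [NontriviallyNormedField 𝕜] [NormedAddCommGroup E] [NormedSpace 𝕜 E] (M : E →L[𝕜] E)
    {S Sinv : E →L[𝕜] E} (h : Sinv * S = 1) (x : E) : ‖M x‖ ≤ ‖M * Sinv‖ * ‖S x‖ := by
  have hx : Sinv (S x) = x := by rw [← mul_apply_eq_comp, h, one_apply_eq_self]
  simpa only [mul_apply_eq_comp, hx] using (M * Sinv).le_opNorm (S x)

theorem ContinuousLinearMap.hasDerivAt_comp {E F : Type*} [NormedAddCommGroup E] [NormedSpace ℂ E]
    [NormedAddCommGroup F] [NormedSpace ℂ F] (L : E →L[ℂ] F) {f : ℝ → E} {f' : E} {s : ℝ}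
    (hf : HasDerivAt f f' s) : HasDerivAt (fun t => L (f t)) (L f') s :=
  (L.restrictScalars ℝ).hasFDerivAt.comp_hasDerivAt s hf

theorem hasDerivAt_exp_smul_apply {E : Type*} [NormedAddCommGroup E] [NormedSpace ℂ E]
    [CompleteSpace E] (T : E →L[ℂ] E) (w : E) (s : ℝ) :
    HasDerivAt (fun t : ℝ => NormedSpace.exp (t • T) w) (T (NormedSpace.exp (s • T) w)) s :=
  (ContinuousLinearMap.apply ℂ E w).hasDerivAt_comp (hasDerivAt_exp_smul_const' T s)

theorem le_exp_mul_mul_of_hasDerivAt {Φ Φ' : ℝ → ℝ} {k t : ℝ}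
    (hΦ : ∀ s, HasDerivAt Φ (Φ' s) s) (hle : ∀ s, Φ' s ≤ k * Φ s) (ht : 0 ≤ t) :
    Φ t ≤ Real.exp (k * t) * Φ 0 := by
  have := le_gronwallBound_of_liminf_deriv_right_le (a := 0) (b := t) (ε := 0)
    (continuous_iff_continuousAt.2 fun s => (hΦ s).continuousAt).continuousOn
    (fun s _ _ hr => (hΦ s).hasDerivWithinAt.liminf_right_slope_le hr) le_rfl
    (fun s _ => by simpa using hle s) t ⟨ht, le_rfl⟩
  simpa [gronwallBound_ε0, mul_comm] using this

theorem nonempty_of_iInf_pos {ι : Type*} {f : ι → ℝ} (h : 0 < ⨅ i, f i) : Nonempty ι := by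
  by_contra hι
  rw [not_nonempty_iff] at hι
  simp at h

/-- No boundedness hypothesis is needed: a real infimum that is not bounded below is `0`, and so
is `f i / 0`. -/
theorem iInf_div_mul_le_of_iInf_div_pos {ι : Type*} {f n : ι → ℝ} (hn : ∀ i, 0 ≤ n i)
    (h : 0 < ⨅ i, f i / n i) (i : ι) : (⨅ i, f i / n i) * n i ≤ f i := by
  have hbdd : BddBelow (Set.range fun i => f i / n i) := by
    by_contra hb
    rw [Real.iInf_of_not_bddBelow hb] at h
    exact h.false
  have hle := ciInf_le hbdd i
  have hni : 0 < n i := (hn i).lt_of_ne fun h0 => by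
    rw [← h0, div_zero] at hle
    exact (h.trans_le hle).false
  exact (le_div_iff₀ hni).1 hle

theorem iInf_div_pos_of_mul_le {ι : Type*} [Nonempty ι] {f n : ι → ℝ} {c : ℝ} (hc : 0 < c)
    (hn : ∀ i, 0 < n i) (h : ∀ i, c * n i ≤ f i) : 0 < ⨅ i, f i / n i :=
  hc.trans_le (le_ciInf fun i => (le_div_iff₀ (hn i)).2 (by linarith [h i]))

theorem div_sq_mul_sq_le_mul_sq {δ C u v : ℝ} (hδ : 0 ≤ δ) (hC : 0 < C) (hu : 0 ≤ u)
    (h : u ≤ C * v) : δ / C ^ 2 * u ^ 2 ≤ δ * v ^ 2 :=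
  calc δ / C ^ 2 * u ^ 2 ≤ δ / C ^ 2 * (C * v) ^ 2 := by gcongr
    _ = δ * v ^ 2 := by field_simp

/-- The constant is the top eigenvalue of `!![a, √(a * c); √(a * c), b + c]`, whose trace is
`a + b + c` and whose determinant is `a * b`. -/
theorem add_add_add_le_top_eigenvalue_mul {a b c d e p q r X : ℝ} (ha : 0 ≤ a) (hc : 0 ≤ c)
    (hd : 0 ≤ d) (he : 0 ≤ e) (hr₀ : 0 ≤ r)
    (hp : p ≤ a * d) (hq : q ≤ b * e) (hr : r ≤ c * e) (hX : X ^ 2 ≤ 4 * p * r) :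
    p + q + r + X ≤ (a + b + c + √((a + b + c) ^ 2 - 4 * (a * b))) / 2 * (d + e) := by
  set R := √((a + b + c) ^ 2 - 4 * (a * b))
  have hR : R ^ 2 = (b + c - a) ^ 2 + 4 * (a * c) := by
    rw [Real.sq_sqrt (by nlinarith [mul_nonneg ha hc, sq_nonneg (b + c - a)])]; ring
  have hRa : |b + c - a| ≤ R :=
    abs_le_of_sq_le_sq' (by nlinarith [mul_nonneg ha hc]) (Real.sqrt_nonneg _) |> abs_le.2
  set A := (b + c - a + R) / 2 with hA_def
  set B := (a - b - c + R) / 2 with hB_def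
  have hA : 0 ≤ A := by linarith [hA_def, neg_abs_le (b + c - a)]
  have hB : 0 ≤ B := by linarith [hB_def, le_abs_self (b + c - a)]
  have hAB : A * B = a * c := by linear_combination hR / 4
  have hpr : p * r ≤ (A * d) * (B * e) := by
    calc p * r ≤ (a * d) * (c * e) := mul_le_mul hp hr hr₀ (by positivity)
      _ = (A * d) * (B * e) := by linear_combination (d * e) * hAB.symm
  have hXle : X ≤ A * d + B * e :=
    abs_le_of_sq_le_sq' (by nlinarith [sq_nonneg (A * d - B * e)]) (by positivity) |>.2
  linear_combination hp + hq + hr + hXle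

/-- The paper's `1 / ω_θ`, where `K` stands for `‖A^{-1/2} D A^{-1/2}‖`. -/
noncomputable def invDecayRate (α β δ θ K : ℝ) : ℝ :=
  1 / β + K ^ 2 / (2 * δ) + (θ / α + 1 / (θ * δ)) / 2
    + √((θ / α + 1 / (θ * δ) + K ^ 2 / δ) ^ 2 - 4 / (α * δ)) / 2

theorem invDecayRate_pos {α β δ θ : ℝ} (K : ℝ) (hα : 0 < α) (hβ : 0 < β) (hδ : 0 < δ)
    (hθ : 0 < θ) : 0 < invDecayRate α β δ θ K := by
  unfold invDecayRate
  positivity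

section InnerProductSpace

variable {H : Type*} [NormedAddCommGroup H] [InnerProductSpace ℂ H]

theorem mul_sq_norm_le_re_inner_of_iInf_pos (D : H →L[ℂ] H) {L : H → H} (hL : L 0 = 0) {m : ℝ}
    (hm : m = ⨅ x : {x : H // x ≠ 0}, (⟪D x, x⟫_ℂ).re / ‖L x‖ ^ 2) (hpos : 0 < m) (x : H) :
    m * ‖L x‖ ^ 2 ≤ (⟪D x, x⟫_ℂ).re := by
  rcases eq_or_ne x 0 with rfl | hx
  · simp [hL]
  · subst hm
    exact iInf_div_mul_le_of_iInf_div_pos (fun _ => by positivity) hpos ⟨x, hx⟩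

theorem iInf_re_inner_div_sq_norm_pos [Nonempty {x : H // x ≠ 0}] {D S : H →L[ℂ] H}
    {L : H → H} {C δ : ℝ} (hδ : 0 < δ) (hL : ∀ x ≠ 0, L x ≠ 0)
    (hLS : ∀ x, ‖L x‖ ≤ C * ‖S x‖) (hDδ : ∀ x, δ * ‖S x‖ ^ 2 ≤ (⟪D x, x⟫_ℂ).re) :
    0 < ⨅ x : {x : H // x ≠ 0}, (⟪D x, x⟫_ℂ).re / ‖L x‖ ^ 2 := by
  obtain ⟨x₀, hx₀⟩ := ‹Nonempty {x : H // x ≠ 0}›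
  have hC : 0 < C := by
    have := (norm_pos_iff.2 (hL x₀ hx₀)).trans_le (hLS x₀)
    by_contra! hC
    nlinarith [norm_nonneg (S x₀)]
  exact iInf_div_pos_of_mul_le (c := δ / C ^ 2) (by positivity)
    (fun x => pow_pos (norm_pos_iff.2 (hL x x.2)) 2)
    (fun x => (div_sq_mul_sq_le_mul_sq hδ.le hC (norm_nonneg _) (hLS x)).trans (hDδ x))

theorem re_formTheta_self (D S Sinv : H →L[ℂ] H) (θ : ℝ) (u : H × H) :
    (formTheta D S Sinv θ u u).re
      = ‖u.1‖ ^ 2 + θ * ‖Sinv u.1‖ ^ 2 + ‖S u.2‖ ^ 2 + θ * ‖u.2‖ ^ 2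
        + θ * ‖Sinv (D u.2)‖ ^ 2 + 2 * θ * (⟪Sinv (D u.2), Sinv u.1⟫_ℂ).re := by
  have hnorm (x : H) : (⟪x, x⟫_ℂ).re = ‖x‖ ^ 2 := inner_self_eq_norm_sq (𝕜 := ℂ) x
  have hsymm : (⟪Sinv u.1, Sinv (D u.2)⟫_ℂ).re = (⟪Sinv (D u.2), Sinv u.1⟫_ℂ).re :=
    inner_re_symm (𝕜 := ℂ) _ _
  simp only [formTheta, Complex.add_re, Complex.re_ofReal_mul, hnorm, hsymm]
  ring

theorem HasDerivAt.formTheta_self (D S Sinv : H →L[ℂ] H) (θ : ℝ) {u : ℝ → H × H} {u' : H × H}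
    {s : ℝ} (hu : HasDerivAt u u' s) :
    HasDerivAt (fun t => formTheta D S Sinv θ (u t) (u t))
      (formTheta D S Sinv θ u' (u s) + formTheta D S Sinv θ (u s) u') s := by
  have h₁ := (ContinuousLinearMap.fst ℂ H H).hasDerivAt_comp hu
  have h₂ := (ContinuousLinearMap.snd ℂ H H).hasDerivAt_comp hu
  have hSinv₁ := Sinv.hasDerivAt_comp h₁
  have hDSinv₂ := Sinv.hasDerivAt_comp (D.hasDerivAt_comp h₂)
  convert ((((((h₁.inner ℂ h₁).add ((hSinv₁.inner ℂ hSinv₁).const_mul (θ : ℂ))).add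
    ((S.hasDerivAt_comp h₂).inner ℂ (S.hasDerivAt_comp h₂))).add
    ((h₂.inner ℂ h₂).const_mul (θ : ℂ))).add ((hDSinv₂.inner ℂ hDSinv₂).const_mul (θ : ℂ))).add
    ((hDSinv₂.inner ℂ hSinv₁).const_mul (θ : ℂ))).add
    ((hSinv₁.inner ℂ hDSinv₂).const_mul (θ : ℂ)) using 1
  · rfl
  · funext t
    simp only [formTheta, Pi.add_apply, ContinuousLinearMap.coe_fst',
      ContinuousLinearMap.coe_snd']
  · simp only [formTheta, ContinuousLinearMap.coe_fst', ContinuousLinearMap.coe_snd']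
    ring

theorem re_formTheta_Tlin_add [CompleteSpace H] {A D S Sinv : H →L[ℂ] H} (θ : ℝ)
    (hS : IsSelfAdjoint S) (hSA : S * S = A) (hSSinv : S * Sinv = 1) (u : H × H) :
    (formTheta D S Sinv θ (Tlin A D u) u + formTheta D S Sinv θ u (Tlin A D u)).re
      = -2 * ((⟪D u.1, u.1⟫_ℂ).re + θ * (⟪D u.2, u.2⟫_ℂ).re) := by
  have hSinv := hS.of_mul_eq_one hSSinv
  have hSinvS := hS.mul_eq_one_symm hSSinv
  have hA (x y : H) : ⟪A x, y⟫_ℂ = ⟪S x, S y⟫_ℂ := by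
    rw [← hSA, mul_apply_eq_comp]; exact hS.isSymmetric _ _
  have hA' (x y : H) : ⟪x, A y⟫_ℂ = ⟪S x, S y⟫_ℂ := by
    rw [← hSA, mul_apply_eq_comp]; exact (hS.isSymmetric _ _).symm
  have hSSinv' (x y : H) : ⟪S x, Sinv y⟫_ℂ = ⟪x, y⟫_ℂ := calc
    ⟪S x, Sinv y⟫_ℂ = ⟪x, S (Sinv y)⟫_ℂ := hS.isSymmetric _ _
    _ = ⟪x, y⟫_ℂ := by rw [← mul_apply_eq_comp, hSSinv, one_apply_eq_self]
  have hSinvS' (x y : H) : ⟪Sinv x, S y⟫_ℂ = ⟪x, y⟫_ℂ := calc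
    ⟪Sinv x, S y⟫_ℂ = ⟪x, Sinv (S y)⟫_ℂ := hSinv.isSymmetric _ _
    _ = ⟪x, y⟫_ℂ := by rw [← mul_apply_eq_comp, hSinvS, one_apply_eq_self]
  have hSinvA (x : H) : Sinv (A x) = S x := by
    rw [← hSA, ← mul_apply_eq_comp, ← mul_assoc, hSinvS, one_mul]
  have hre (x : H) : (⟪x, D x⟫_ℂ).re = (⟪D x, x⟫_ℂ).re := inner_re_symm (𝕜 := ℂ) _ _
  simp only [formTheta, Tlin, ContinuousLinearMap.prod_apply, sub_apply,
    neg_apply, ContinuousLinearMap.comp_apply,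
    ContinuousLinearMap.coe_fst', ContinuousLinearMap.coe_snd', map_sub, map_neg,
    inner_sub_left, inner_sub_right, inner_neg_left, inner_neg_right,
    hSinvA, hA, hA', hSSinv', hSinvS', Complex.add_re, Complex.sub_re, Complex.neg_re,
    Complex.re_ofReal_mul, hre]
  ring

theorem HasDerivAt.re_formTheta_self [CompleteSpace H] {A D S Sinv : H →L[ℂ] H} (θ : ℝ)
    (hS : IsSelfAdjoint S) (hSA : S * S = A) (hSSinv : S * Sinv = 1) {u : ℝ → H × H} {s : ℝ}
    (hu : HasDerivAt u (Tlin A D (u s)) s) :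
    HasDerivAt (fun t => (formTheta D S Sinv θ (u t) (u t)).re)
      (-2 * ((⟪D (u s).1, (u s).1⟫_ℂ).re + θ * (⟪D (u s).2, (u s).2⟫_ℂ).re)) s := by
  rw [← re_formTheta_Tlin_add θ hS hSA hSSinv]
  exact Complex.reCLM.hasFDerivAt.comp_hasDerivAt s (hu.formTheta_self D S Sinv θ)

theorem re_formTheta_self_le_invDecayRate_mul {D S Sinv : H →L[ℂ] H} {α β δ θ K : ℝ}
    (hα : 0 < α) (hβ : 0 < β) (hδ : 0 < δ) (hθ : 0 < θ)
    (hDα : ∀ x, α * ‖Sinv x‖ ^ 2 ≤ (⟪D x, x⟫_ℂ).re) (hDβ : ∀ x, β * ‖x‖ ^ 2 ≤ (⟪D x, x⟫_ℂ).re)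
    (hDδ : ∀ x, δ * ‖S x‖ ^ 2 ≤ (⟪D x, x⟫_ℂ).re) (hK : ∀ x, ‖Sinv (D x)‖ ≤ K * ‖S x‖)
    (u : H × H) :
    (formTheta D S Sinv θ u u).re
      ≤ invDecayRate α β δ θ K * ((⟪D u.1, u.1⟫_ℂ).re + θ * (⟪D u.2, u.2⟫_ℂ).re) := by
  obtain ⟨x, y⟩ := u
  have hd (x : H) : 0 ≤ (⟪D x, x⟫_ℂ).re := (by positivity : 0 ≤ δ * ‖S x‖ ^ 2).trans (hDδ x)
  have hx : ‖x‖ ^ 2 ≤ 1 / β * (⟪D x, x⟫_ℂ).re := by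
    rw [one_div, le_inv_mul_iff₀ hβ]; exact hDβ x
  have hy : θ * ‖y‖ ^ 2 ≤ 1 / β * (θ * (⟪D y, y⟫_ℂ).re) :=
    calc θ * ‖y‖ ^ 2 = 1 / β * (θ * (β * ‖y‖ ^ 2)) := by field_simp
      _ ≤ 1 / β * (θ * (⟪D y, y⟫_ℂ).re) := by grw [hDβ y]
  have hp : θ * ‖Sinv x‖ ^ 2 ≤ θ / α * (⟪D x, x⟫_ℂ).re :=
    calc θ * ‖Sinv x‖ ^ 2 = θ / α * (α * ‖Sinv x‖ ^ 2) := by field_simp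
      _ ≤ θ / α * (⟪D x, x⟫_ℂ).re := by grw [hDα x]
  have hq : ‖S y‖ ^ 2 ≤ 1 / (θ * δ) * (θ * (⟪D y, y⟫_ℂ).re) :=
    calc ‖S y‖ ^ 2 = 1 / (θ * δ) * (θ * (δ * ‖S y‖ ^ 2)) := by field_simp
      _ ≤ 1 / (θ * δ) * (θ * (⟪D y, y⟫_ℂ).re) := by grw [hDδ y]
  have hr : θ * ‖Sinv (D y)‖ ^ 2 ≤ K ^ 2 / δ * (θ * (⟪D y, y⟫_ℂ).re) :=
    calc θ * ‖Sinv (D y)‖ ^ 2 ≤ θ * (K * ‖S y‖) ^ 2 := by grw [hK y]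
      _ = K ^ 2 / δ * (θ * (δ * ‖S y‖ ^ 2)) := by field_simp
      _ ≤ K ^ 2 / δ * (θ * (⟪D y, y⟫_ℂ).re) := by grw [hDδ y]
  have hX : (2 * θ * (⟪Sinv (D y), Sinv x⟫_ℂ).re) ^ 2
      ≤ 4 * (θ * ‖Sinv x‖ ^ 2) * (θ * ‖Sinv (D y)‖ ^ 2) := by
    have h := (Complex.abs_re_le_norm _).trans
      (norm_inner_le_norm (𝕜 := ℂ) (Sinv (D y)) (Sinv x))
    rw [← sq_le_sq₀ (abs_nonneg _) (by positivity), sq_abs] at h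
    calc (2 * θ * (⟪Sinv (D y), Sinv x⟫_ℂ).re) ^ 2
        = 4 * θ ^ 2 * (⟪Sinv (D y), Sinv x⟫_ℂ).re ^ 2 := by ring
      _ ≤ 4 * θ ^ 2 * (‖Sinv (D y)‖ * ‖Sinv x‖) ^ 2 := by gcongr
      _ = 4 * (θ * ‖Sinv x‖ ^ 2) * (θ * ‖Sinv (D y)‖ ^ 2) := by ring
  have heig := add_add_add_le_top_eigenvalue_mul (by positivity) (by positivity) (hd x)
    (by positivity [hd y]) (by positivity) hp hq hr hX
  have hab : 4 * (θ / α * (1 / (θ * δ))) = 4 / (α * δ) := by field_simp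
  rw [hab] at heig
  rw [re_formTheta_self, invDecayRate]
  linear_combination hx + hy + heig

end InnerProductSpace

theorem exp_decay_formTheta_general
    {H : Type*} [NormedAddCommGroup H] [InnerProductSpace ℂ H] [CompleteSpace H]
    (A D S Sinv : H →L[ℂ] H)
    (hSsa : IsSelfAdjoint S)
    (hSsq : S * S = A)
    (hSinv : S * Sinv = 1)
    (α β δ : ℝ)
    (hα : α = ⨅ x : {x : H // x ≠ 0}, (inner ℂ (D (x : H)) (x : H) : ℂ).re / ‖Sinv (x : H)‖ ^ 2)
    (hβ : β = ⨅ x : {x : H // x ≠ 0}, (inner ℂ (D (x : H)) (x : H) : ℂ).re / ‖(x : H)‖ ^ 2)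
    (hδ : δ = ⨅ x : {x : H // x ≠ 0}, (inner ℂ (D (x : H)) (x : H) : ℂ).re / ‖S (x : H)‖ ^ 2)
    (hδpos : 0 < δ)
    (θ : ℝ) (hθ : 0 < θ)
    (ω : ℝ)
    (hω : ω = (1 / β + ‖Sinv * D * Sinv‖ ^ 2 / (2 * δ)
        + (θ / α + 1 / (θ * δ)) / 2
        + Real.sqrt ((θ / α + 1 / (θ * δ) + ‖Sinv * D * Sinv‖ ^ 2 / δ) ^ 2
            - 4 / (α * δ)) / 2)⁻¹)
    (t : ℝ) (ht : 0 ≤ t) (w : H × H) :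
    (formTheta D S Sinv θ (NormedSpace.exp (t • Tlin A D) w)
        (NormedSpace.exp (t • Tlin A D) w)).re
      ≤ Real.exp (-2 * ω * t) * (formTheta D S Sinv θ w w).re := by
  have hSinvS := hSsa.mul_eq_one_symm hSinv
  have hSinv_ne (x : H) (hx : x ≠ 0) : Sinv x ≠ 0 := fun h0 => hx <| by
    simpa [h0] using (DFunLike.congr_fun hSinv x).symm
  have hDδ := mul_sq_norm_le_re_inner_of_iInf_pos D (map_zero S) hδ hδpos
  have : Nonempty {x : H // x ≠ 0} := nonempty_of_iInf_pos (hδ ▸ hδpos)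
  have hαpos : 0 < α := hα ▸ iInf_re_inner_div_sq_norm_pos hδpos hSinv_ne
    (Sinv.norm_apply_le_norm_mul_mul_norm_apply hSinvS) hDδ
  have hβpos : 0 < β := hβ ▸ iInf_re_inner_div_sq_norm_pos (L := id) (C := ‖Sinv‖) hδpos
    (fun _ hx => hx) (fun x => by
      simpa using (1 : H →L[ℂ] H).norm_apply_le_norm_mul_mul_norm_apply hSinvS x) hDδ
  have hcoer := re_formTheta_self_le_invDecayRate_mul hαpos hβpos hδpos hθ
    (mul_sq_norm_le_re_inner_of_iInf_pos D (map_zero Sinv) hα hαpos)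
    (mul_sq_norm_le_re_inner_of_iInf_pos D (L := id) rfl hβ hβpos) hDδ
    (by simpa only [mul_apply_eq_comp] using
      (Sinv * D).norm_apply_le_norm_mul_mul_norm_apply hSinvS)
  have hΩ := invDecayRate_pos ‖Sinv * D * Sinv‖ hαpos hβpos hδpos hθ
  have hωΩ : ω = (invDecayRate α β δ θ ‖Sinv * D * Sinv‖)⁻¹ := hω
  have hdecay := le_exp_mul_mul_of_hasDerivAt (k := -2 * ω) (t := t)
    (fun s => (hasDerivAt_exp_smul_apply (Tlin A D) w s).re_formTheta_self θ hSsa hSsq hSinv)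
    (fun s => by
      have := (inv_mul_le_iff₀ hΩ).2 (hcoer (NormedSpace.exp (s • Tlin A D) w))
      rw [hωΩ]
      linarith) ht
  simpa using hdecay

/-- if `δ > 0`, then for every `θ > 0`, `t ≥ 0` and `w ∈ H × H`,
`[exp(tT) w, exp(tT) w]_θ ≤ exp(−2 ω_θ t) · [w, w]_θ`: the semigroup `exp(tT)` decays
at exponential rate `ω_θ` in the norm `|·|_θ`. -/
theorem exp_decay_formTheta
    {H : Type*} [NormedAddCommGroup H] [InnerProductSpace ℂ H] [CompleteSpace H]
    [Nontrivial H]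
    (A D S Sinv : H →L[ℂ] H)
    (hA : IsSelfAdjoint A) (a₀ : ℝ) (ha₀ : 0 < a₀)
    (hApd : ∀ x : H, a₀ * ‖x‖ ^ 2 ≤ (inner ℂ (A x) x : ℂ).re)
    (hSsa : IsSelfAdjoint S) (hSpos : ∀ x : H, 0 ≤ (inner ℂ (S x) x : ℂ).re)
    (hSsq : S * S = A)
    (hSinv : S * Sinv = 1) (hSinv' : Sinv * S = 1)
    (hDacc : ∀ x : H, 0 ≤ (inner ℂ (D x) x : ℂ).re)
    (ν : ℝ) (hν : 0 < ν)
    (hDsec : ∀ x : H, |(inner ℂ (D x) x : ℂ).im| ≤ ν * (inner ℂ (D x) x : ℂ).re)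
    (α β δ : ℝ)
    (hα : α = ⨅ x : {x : H // x ≠ 0}, (inner ℂ (D (x : H)) (x : H) : ℂ).re / ‖Sinv (x : H)‖ ^ 2)
    (hβ : β = ⨅ x : {x : H // x ≠ 0}, (inner ℂ (D (x : H)) (x : H) : ℂ).re / ‖(x : H)‖ ^ 2)
    (hδ : δ = ⨅ x : {x : H // x ≠ 0}, (inner ℂ (D (x : H)) (x : H) : ℂ).re / ‖S (x : H)‖ ^ 2)
    (hδpos : 0 < δ)
    (θ : ℝ) (hθ : 0 < θ)
    (ω : ℝ)
    (hω : ω = (1 / β + ‖Sinv * D * Sinv‖ ^ 2 / (2 * δ)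
        + (θ / α + 1 / (θ * δ)) / 2
        + Real.sqrt ((θ / α + 1 / (θ * δ) + ‖Sinv * D * Sinv‖ ^ 2 / δ) ^ 2
            - 4 / (α * δ)) / 2)⁻¹)
    (t : ℝ) (ht : 0 ≤ t) (w : H × H) :
    (formTheta D S Sinv θ (NormedSpace.exp (t • Tlin A D) w)
        (NormedSpace.exp (t • Tlin A D) w)).re
      ≤ Real.exp (-2 * ω * t) * (formTheta D S Sinv θ w w).re :=
  exp_decay_formTheta_general A D S Sinv hSsa hSsq hSinv α β δ hα hβ hδ hδpos θ hθ ω hω t ht w
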